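/- Let S ⊆ M_{m,n}(ℝ) be a linear subspace and P_S the orthogonal projection onto vec(S) ⊆ ℝ^{mn}. Then d(S)² = μ_max(P_S), where d(S) := max{ ‖Y‖_op : Y ∈ S, ‖Y‖_F ≤ 1 }. -/

import Mathlib

open Matrix Complex

noncomputable section

def vKron {α β : Type*} (v : α → ℝ) (w : β → ℝ) : α × β → ℝ := fun p => v p.1 * w p.2

def cKron {α β : Type*} (v : α → ℂ) (w : β → ℂ) : α × β → ℂ := fun p => v p.1 * w p.2

/-- Partial transpose on the second tensor factor. -/
def pt {α β : Type*} (B : Matrix (α × β) (α × β) ℝ) : Matrix (α × β) (α × β) ℝ :=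
  Matrix.of fun p q => B (p.1, q.2) (q.1, p.2)

/-- Values of the quadratic form of `B` on real unit product vectors. -/
def prodSet {α β : Type*} [Fintype α] [Fintype β] (B : Matrix (α × β) (α × β) ℝ) : Set ℝ :=
  {r | ∃ (v : α → ℝ) (w : β → ℝ), v ⬝ᵥ v = 1 ∧ w ⬝ᵥ w = 1 ∧
    r = vKron v w ⬝ᵥ B.mulVec (vKron v w)}

/-- The numerical range of a complex matrix. -/
def numRange {N : Type*} [Fintype N] (A : Matrix N N ℂ) : Set ℂ :=
  {z | ∃ x : N → ℂ, star x ⬝ᵥ x = 1 ∧ z = star x ⬝ᵥ A.mulVec x}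

/-- `W^{1+i}(B) = {c ∈ ℝ : c(1+i) ∈ W(B + iB^Γ)}`. -/
def W1i {α β : Type*} [Fintype α] [Fintype β] (B : Matrix (α × β) (α × β) ℝ) : Set ℝ :=
  {c | (c : ℂ) * (1 + Complex.I) ∈
    numRange (B.map (fun t => (t : ℂ)) + Complex.I • (pt B).map (fun t => (t : ℂ)))}

def frobNorm {a b : ℕ} (Y : Matrix (Fin a) (Fin b) ℝ) : ℝ :=
  Real.sqrt (∑ i, ∑ j, (Y i j) ^ 2)

/-- The operator (largest singular value) norm, as the sup of `|wᵀ Y v|` over unit vectors. -/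
def opNorm' {a b : ℕ} (Y : Matrix (Fin a) (Fin b) ℝ) : ℝ :=
  sSup {r | ∃ (w : Fin a → ℝ) (v : Fin b → ℝ), w ⬝ᵥ w = 1 ∧ v ⬝ᵥ v = 1 ∧
    r = |w ⬝ᵥ Y.mulVec v|}

/-- `d(S) = max { ‖Y‖_op : Y ∈ S, ‖Y‖_F ≤ 1 }`. -/
def dSub {a b : ℕ} (S : Submodule ℝ (Matrix (Fin a) (Fin b) ℝ)) : ℝ :=
  sSup {r | ∃ Y ∈ S, frobNorm Y ≤ 1 ∧ r = opNorm' Y}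

/-- Column-by-column vectorization. -/
def vec {a b : ℕ} (Y : Matrix (Fin a) (Fin b) ℝ) : Fin b × Fin a → ℝ := fun p => Y p.2 p.1

/-!
For a unit product vector `x = v ⊗ w` and `Y ∈ S` we have `wᵀ Y v = ⟨vec Y, x⟩ = ⟨vec Y, P x⟩`,
so by Cauchy–Schwarz `|wᵀ Y v| ≤ ‖Y‖_F ‖P x‖`, and `‖P x‖² = xᵀ P x` because `P` is an orthogonal
projection; this gives `d(S)² ≤ μ_max(P)`. Conversely `P x = vec Y` for some `Y ∈ S`, and then
`xᵀ P x = ‖Y‖_F² = wᵀ Y v ≤ d(S) ‖Y‖_F`, whence `xᵀ P x ≤ d(S)²`.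
-/

section DotProduct

variable {ι : Type*} [Fintype ι]

lemma dotProduct_self_nonneg (x : ι → ℝ) : 0 ≤ x ⬝ᵥ x :=
  dotProduct_self_star_nonneg x

lemma sq_dotProduct_le (x y : ι → ℝ) : (x ⬝ᵥ y) ^ 2 ≤ (x ⬝ᵥ x) * (y ⬝ᵥ y) := by
  simpa [dotProduct, sq] using Finset.sum_mul_sq_le_sq_mul_sq Finset.univ x y

lemma Matrix.IsSymm.dotProduct_mulVec_comm {P : Matrix ι ι ℝ} (hsym : P.IsSymm) (x y : ι → ℝ) :
    x ⬝ᵥ P *ᵥ y = P *ᵥ x ⬝ᵥ y := by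
  rw [dotProduct_mulVec, ← vecMul_transpose, hsym.eq]

variable {P : Matrix ι ι ℝ}

lemma Matrix.IsSymm.dotProduct_mulVec_self_of_idempotent (hsym : P.IsSymm) (hidem : P * P = P)
    (x : ι → ℝ) : x ⬝ᵥ P *ᵥ x = P *ᵥ x ⬝ᵥ P *ᵥ x := by
  rw [← hsym.dotProduct_mulVec_comm, mulVec_mulVec, hidem]

lemma Matrix.IsSymm.dotProduct_mulVec_self_nonneg_of_idempotent (hsym : P.IsSymm)
    (hidem : P * P = P) (x : ι → ℝ) : 0 ≤ x ⬝ᵥ P *ᵥ x :=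
  hsym.dotProduct_mulVec_self_of_idempotent hidem x ▸ dotProduct_self_nonneg _

lemma Matrix.IsSymm.dotProduct_mulVec_self_le_of_idempotent (hsym : P.IsSymm)
    (hidem : P * P = P) (x : ι → ℝ) : x ⬝ᵥ P *ᵥ x ≤ x ⬝ᵥ x := by
  have hCS := sq_dotProduct_le x (P *ᵥ x)
  rw [← hsym.dotProduct_mulVec_self_of_idempotent hidem x] at hCS
  nlinarith [hsym.dotProduct_mulVec_self_nonneg_of_idempotent hidem x, dotProduct_self_nonneg x]

lemma Matrix.IsSymm.sq_dotProduct_le_of_mulVec_eq_self (hsym : P.IsSymm) (hidem : P * P = P)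
    {y : ι → ℝ} (hy : P *ᵥ y = y) (x : ι → ℝ) :
    (y ⬝ᵥ x) ^ 2 ≤ (y ⬝ᵥ y) * (x ⬝ᵥ P *ᵥ x) := by
  calc (y ⬝ᵥ x) ^ 2 = (y ⬝ᵥ P *ᵥ x) ^ 2 := by rw [hsym.dotProduct_mulVec_comm, hy]
    _ ≤ (y ⬝ᵥ y) * (P *ᵥ x ⬝ᵥ P *ᵥ x) := sq_dotProduct_le _ _
    _ = (y ⬝ᵥ y) * (x ⬝ᵥ P *ᵥ x) := by rw [hsym.dotProduct_mulVec_self_of_idempotent hidem]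

end DotProduct

lemma vKron_dotProduct_vKron {α β : Type*} [Fintype α] [Fintype β] (v v' : α → ℝ)
    (w w' : β → ℝ) : vKron v w ⬝ᵥ vKron v' w' = (v ⬝ᵥ v') * (w ⬝ᵥ w') := by
  simp only [vKron, dotProduct, Fintype.sum_prod_type, Finset.sum_mul, Finset.mul_sum]
  rw [Finset.sum_comm]
  exact Finset.sum_congr rfl fun _ _ => Finset.sum_congr rfl fun _ _ => by ring

section Vec

variable {a b : ℕ}

lemma vec_dotProduct_vKron (Y : Matrix (Fin a) (Fin b) ℝ) (v : Fin b → ℝ) (w : Fin a → ℝ) :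
    _root_.vec Y ⬝ᵥ vKron v w = w ⬝ᵥ Y *ᵥ v := by
  simp only [_root_.vec, vKron, dotProduct, mulVec, Fintype.sum_prod_type, Finset.mul_sum]
  rw [Finset.sum_comm]
  exact Finset.sum_congr rfl fun _ _ => Finset.sum_congr rfl fun _ _ => by ring

lemma vec_smul (c : ℝ) (Y : Matrix (Fin a) (Fin b) ℝ) :
    _root_.vec (c • Y) = c • _root_.vec Y :=
  rfl

lemma frobNorm_eq_sqrt_vec (Y : Matrix (Fin a) (Fin b) ℝ) :
    frobNorm Y = √(_root_.vec Y ⬝ᵥ _root_.vec Y) := by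
  simp only [frobNorm, _root_.vec, dotProduct, Fintype.sum_prod_type, sq]
  rw [Finset.sum_comm]

lemma frobNorm_sq (Y : Matrix (Fin a) (Fin b) ℝ) :
    frobNorm Y ^ 2 = _root_.vec Y ⬝ᵥ _root_.vec Y := by
  rw [frobNorm_eq_sqrt_vec, Real.sq_sqrt (dotProduct_self_nonneg _)]

lemma frobNorm_nonneg (Y : Matrix (Fin a) (Fin b) ℝ) : 0 ≤ frobNorm Y :=
  Real.sqrt_nonneg _

lemma frobNorm_smul (c : ℝ) (Y : Matrix (Fin a) (Fin b) ℝ) :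
    frobNorm (c • Y) = |c| * frobNorm Y := by
  rw [frobNorm_eq_sqrt_vec, frobNorm_eq_sqrt_vec, vec_smul, smul_dotProduct, dotProduct_smul,
    smul_eq_mul, smul_eq_mul, ← mul_assoc, Real.sqrt_mul (mul_self_nonneg c),
    Real.sqrt_mul_self_eq_abs]

lemma abs_dotProduct_mulVec_le_frobNorm (Y : Matrix (Fin a) (Fin b) ℝ) {w : Fin a → ℝ}
    {v : Fin b → ℝ} (hw : w ⬝ᵥ w = 1) (hv : v ⬝ᵥ v = 1) : |w ⬝ᵥ Y *ᵥ v| ≤ frobNorm Y := by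
  rw [← vec_dotProduct_vKron, frobNorm_eq_sqrt_vec]
  apply Real.abs_le_sqrt
  simpa [vKron_dotProduct_vKron, hv, hw] using sq_dotProduct_le (_root_.vec Y) (vKron v w)

lemma bddAbove_opNorm'_set (Y : Matrix (Fin a) (Fin b) ℝ) :
    BddAbove {r | ∃ (w : Fin a → ℝ) (v : Fin b → ℝ), w ⬝ᵥ w = 1 ∧ v ⬝ᵥ v = 1 ∧
      r = |w ⬝ᵥ Y *ᵥ v|} := by
  refine ⟨frobNorm Y, ?_⟩
  rintro r ⟨w, v, hw, hv, rfl⟩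
  exact abs_dotProduct_mulVec_le_frobNorm Y hw hv

lemma abs_dotProduct_mulVec_le_opNorm' (Y : Matrix (Fin a) (Fin b) ℝ) {w : Fin a → ℝ}
    {v : Fin b → ℝ} (hw : w ⬝ᵥ w = 1) (hv : v ⬝ᵥ v = 1) : |w ⬝ᵥ Y *ᵥ v| ≤ opNorm' Y :=
  le_csSup (bddAbove_opNorm'_set Y) ⟨w, v, hw, hv, rfl⟩

lemma opNorm'_le_frobNorm (Y : Matrix (Fin a) (Fin b) ℝ) : opNorm' Y ≤ frobNorm Y := by
  apply Real.sSup_le _ (frobNorm_nonneg Y)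
  rintro r ⟨w, v, hw, hv, rfl⟩
  exact abs_dotProduct_mulVec_le_frobNorm Y hw hv

end Vec

section Subspace

variable {a b : ℕ} (S : Submodule ℝ (Matrix (Fin a) (Fin b) ℝ))

lemma opNorm'_le_dSub {Y : Matrix (Fin a) (Fin b) ℝ} (hY : Y ∈ S) (hF : frobNorm Y ≤ 1) :
    opNorm' Y ≤ dSub S := by
  refine le_csSup ⟨1, ?_⟩ ⟨Y, hY, hF, rfl⟩
  rintro r ⟨Z, -, hZ, rfl⟩
  exact (opNorm'_le_frobNorm Z).trans hZ

lemma dSub_nonneg : 0 ≤ dSub S := by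
  refine Real.sSup_nonneg ?_
  rintro r ⟨Y, -, -, rfl⟩
  refine Real.sSup_nonneg ?_
  rintro r ⟨w, v, -, -, rfl⟩
  exact abs_nonneg _

lemma dSub_le {c : ℝ} (hc : 0 ≤ c)
    (h : ∀ Y ∈ S, frobNorm Y ≤ 1 → ∀ (w : Fin a → ℝ) (v : Fin b → ℝ),
      w ⬝ᵥ w = 1 → v ⬝ᵥ v = 1 → |w ⬝ᵥ Y *ᵥ v| ≤ c) :
    dSub S ≤ c := by
  refine Real.sSup_le ?_ hc
  rintro r ⟨Y, hY, hF, rfl⟩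
  refine Real.sSup_le ?_ hc
  rintro r ⟨w, v, hw, hv, rfl⟩
  exact h Y hY hF w v hw hv

lemma abs_dotProduct_mulVec_le_dSub_mul_frobNorm {Y : Matrix (Fin a) (Fin b) ℝ} (hY : Y ∈ S)
    {w : Fin a → ℝ} {v : Fin b → ℝ} (hw : w ⬝ᵥ w = 1) (hv : v ⬝ᵥ v = 1) :
    |w ⬝ᵥ Y *ᵥ v| ≤ dSub S * frobNorm Y := by
  rcases (frobNorm_nonneg Y).eq_or_lt with hF | hF
  · simpa [← hF] using abs_dotProduct_mulVec_le_frobNorm Y hw hv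
  set t := frobNorm Y
  have hunit : frobNorm (t⁻¹ • Y) = 1 := by
    rw [frobNorm_smul, abs_inv, abs_of_pos hF, inv_mul_cancel₀ hF.ne']
  have hscaled : |w ⬝ᵥ (t⁻¹ • Y) *ᵥ v| ≤ dSub S :=
    (abs_dotProduct_mulVec_le_opNorm' _ hw hv).trans
      (opNorm'_le_dSub S (S.smul_mem _ hY) hunit.le)
  rw [smul_mulVec, dotProduct_smul, smul_eq_mul, abs_mul, abs_inv, abs_of_pos hF] at hscaled
  rwa [inv_mul_le_iff₀ hF, mul_comm] at hscaled

end Subspace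

section Projection

variable {m n : ℕ} {S : Submodule ℝ (Matrix (Fin m) (Fin n) ℝ)}
  {P : Matrix (Fin n × Fin m) (Fin n × Fin m) ℝ}

lemma Matrix.IsSymm.bddAbove_prodSet (hsym : P.IsSymm) (hidem : P * P = P) :
    BddAbove (prodSet P) := by
  refine ⟨1, ?_⟩
  rintro r ⟨v, w, hv, hw, rfl⟩
  refine (hsym.dotProduct_mulVec_self_le_of_idempotent hidem _).trans_eq ?_
  rw [vKron_dotProduct_vKron, hv, hw, one_mul]

lemma Matrix.IsSymm.sSup_prodSet_nonneg (hsym : P.IsSymm) (hidem : P * P = P) :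
    0 ≤ sSup (prodSet P) := by
  refine Real.sSup_nonneg ?_
  rintro r ⟨v, w, -, -, rfl⟩
  exact hsym.dotProduct_mulVec_self_nonneg_of_idempotent hidem _

lemma Matrix.IsSymm.dSub_sq_le_sSup_prodSet (hsym : P.IsSymm) (hidem : P * P = P)
    (hfix : ∀ Y ∈ S, P *ᵥ _root_.vec Y = _root_.vec Y) : dSub S ^ 2 ≤ sSup (prodSet P) := by
  refine (Real.le_sqrt (dSub_nonneg S) (hsym.sSup_prodSet_nonneg hidem)).1 <|
    dSub_le S (Real.sqrt_nonneg _) fun Y hY hF w v hw hv => ?_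
  rw [← vec_dotProduct_vKron]
  refine Real.abs_le_sqrt ?_
  have hvecY : _root_.vec Y ⬝ᵥ _root_.vec Y ≤ 1 := by
    rw [← frobNorm_sq]
    nlinarith [frobNorm_nonneg Y]
  calc (_root_.vec Y ⬝ᵥ vKron v w) ^ 2
      ≤ (_root_.vec Y ⬝ᵥ _root_.vec Y) * (vKron v w ⬝ᵥ P *ᵥ vKron v w) :=
        hsym.sq_dotProduct_le_of_mulVec_eq_self hidem (hfix Y hY) _
    _ ≤ 1 * sSup (prodSet P) := by
        gcongr
        · exact hsym.dotProduct_mulVec_self_nonneg_of_idempotent hidem _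
        · exact le_csSup (hsym.bddAbove_prodSet hidem) ⟨v, w, hv, hw, rfl⟩
    _ = sSup (prodSet P) := one_mul _

lemma Matrix.IsSymm.sSup_prodSet_le_dSub_sq (hsym : P.IsSymm) (hidem : P * P = P)
    (hrange : ∀ x, ∃ Y ∈ S, P *ᵥ x = _root_.vec Y) : sSup (prodSet P) ≤ dSub S ^ 2 := by
  refine Real.sSup_le ?_ (sq_nonneg _)
  rintro r ⟨v, w, hv, hw, rfl⟩
  obtain ⟨Y, hY, hPY⟩ := hrange (vKron v w)
  have hq : vKron v w ⬝ᵥ P *ᵥ vKron v w = frobNorm Y ^ 2 := by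
    rw [hsym.dotProduct_mulVec_self_of_idempotent hidem, hPY, frobNorm_sq]
  have hq_le : frobNorm Y ^ 2 ≤ dSub S * frobNorm Y := by
    rw [← hq, hsym.dotProduct_mulVec_comm, hPY, vec_dotProduct_vKron]
    exact (le_abs_self _).trans (abs_dotProduct_mulVec_le_dSub_mul_frobNorm S hY hw hv)
  rw [hq]
  nlinarith [frobNorm_nonneg Y]

end Projection

theorem stmt11 {m n : ℕ} (S : Submodule ℝ (Matrix (Fin m) (Fin n) ℝ))
    (P : Matrix (Fin n × Fin m) (Fin n × Fin m) ℝ)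
    (hsym : P.IsSymm) (hidem : P * P = P)
    (hrange : ∀ x : Fin n × Fin m → ℝ, ∃ Y ∈ S, P.mulVec x = _root_.vec Y)
    (hfix : ∀ Y ∈ S, P.mulVec (_root_.vec Y) = _root_.vec Y) :
    (dSub S) ^ 2 = sSup (prodSet P) :=
  le_antisymm (hsym.dSub_sq_le_sSup_prodSet hidem hfix) (hsym.sSup_prodSet_le_dSub_sq hidem hrange)
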